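/- For n ≥ 2, define an n×n symmetric matrix A_n whose (1,j) and (j,1) entries are 1 for j ≥ 2, all other off-diagonal entries are 1, diagonal entries are 0 (i.e., A_n is the adjacency matrix of K_n). For k ≥ 0 define A_{n*k} as the (n+k)×(n+k) matrix extending A_{n*(k-1)} by one new row and column whose only nonzero entries are a 1 in position (1, n+k) and (n+k, 1), with A_{n*0} = A_n. Then the characteristic polynomial satisfies P_{A_{n*n}}(λ) = λⁿ·P_{A_{n*0}}(λ) - n·λ^(n-1)·P_{A_{(n-1)*0}}(λ), where P_M(λ) = det(λI - M). -/

import Mathlib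

open Matrix Polynomial

/-- The matrix `A_{n*k}` of size `(n+k) × (n+k)`: the adjacency matrix of the graph
obtained from the complete graph `K_n` (on vertices `0, …, n-1`) by appending `k`
pendant vertices `n, …, n+k-1`, each attached only to vertex `0`.  In particular
`A_{n*0}` is the adjacency matrix of `K_n`. -/
def Ank (n k : ℕ) : Matrix (Fin (n + k)) (Fin (n + k)) ℝ :=
  Matrix.of fun i j =>
    if i ≠ j ∧ (i.val = 0 ∨ j.val = 0 ∨ (i.val < n ∧ j.val < n)) then 1 else 0

lemma det_diagonal_sub_one {K : Type*} [Field K] {m : ℕ} (d : Fin m → K)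
    (hd : ∀ i, d i ≠ 0) :
    (Matrix.diagonal d - Matrix.of (fun _ _ => (1:K))).det
      = (∏ i, d i) * (1 - ∑ i, (d i)⁻¹) := by
  have hA : IsUnit (Matrix.diagonal d).det := by
    rw [det_diagonal]
    exact (Finset.prod_ne_zero_iff.mpr (fun i _ => hd i)).isUnit
  have hrw : Matrix.diagonal d - Matrix.of (fun _ _ => (1:K))
      = Matrix.diagonal d + replicateCol Unit (fun _ : Fin m => (-1:K)) * replicateRow Unit (fun _ : Fin m => (1:K)) := by
    ext i j
    simp [Matrix.mul_apply, sub_eq_add_neg]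
  rw [hrw, det_add_replicateCol_mul_replicateRow hA, det_diagonal]
  congr 1
  have hinv : (Matrix.diagonal d)⁻¹ = Matrix.diagonal (fun i => (d i)⁻¹) := by
    apply Matrix.inv_eq_right_inv
    rw [diagonal_mul_diagonal]
    convert Matrix.diagonal_one with i
    exact mul_inv_cancel₀ (hd i)
  rw [det_unique, hinv]
  simp only [Matrix.add_apply, Matrix.one_apply_eq]
  rw [Matrix.mul_assoc]
  have : (Matrix.diagonal (fun i => (d i)⁻¹) * replicateCol Unit (fun _ : Fin m => (-1:K)))
      = replicateCol Unit (fun i => -(d i)⁻¹) := by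
    ext i j
    simp [Matrix.mul_apply, Matrix.diagonal, Finset.sum_ite_eq, Matrix.replicateCol]
  rw [this, replicateRow_mul_replicateCol_apply]
  simp [dotProduct, sub_eq_add_neg]

lemma charpoly_Ank0_map {K : Type*} [Field K] (φ : Polynomial ℝ →+* K)
    (hx1 : φ X + 1 ≠ 0) (m : ℕ) :
    φ ((Ank m 0).charpoly) = (φ X + 1) ^ m * (1 - (m : K) * (φ X + 1)⁻¹) := by
  rw [Matrix.charpoly, RingHom.map_det, RingHom.mapMatrix_apply]
  have hmat : (charmatrix (Ank m 0)).map φ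
      = Matrix.diagonal (fun _ : Fin (m + 0) => φ X + 1) - Matrix.of (fun _ _ => (1:K)) := by
    ext i j
    have hi : i.val < m := by omega
    have hj : j.val < m := by omega
    by_cases h : i = j
    · subst h
      simp [charmatrix_apply_eq, Ank, Matrix.map_apply]
    · simp [Matrix.map_apply, charmatrix_apply_ne _ _ _ h, Ank, h, hi, hj,
        Matrix.diagonal_apply_ne _ h]
  rw [hmat, det_diagonal_sub_one _ (fun _ => hx1)]
  simp [Finset.card_univ, nsmul_eq_mul]

lemma charpoly_Ankn_map {K : Type*} [Field K] (φ : Polynomial ℝ →+* K) (m : ℕ)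
    (hx : φ X ≠ 0) (hx1 : φ X + 1 ≠ 0)
    (ha : φ X + 1 - ((m+2 : ℕ) : K) * (φ X)⁻¹ ≠ 0) :
    φ ((Ank (m+2) (m+2)).charpoly)
      = (φ X)^(m+2) * (((φ X + 1 - ((m+2:ℕ):K) * (φ X)⁻¹) * (φ X + 1)^(m+1))
          * (1 - ((φ X + 1 - ((m+2:ℕ):K) * (φ X)⁻¹)⁻¹ + ((m+1:ℕ):K) * (φ X + 1)⁻¹))) := by
  set x := φ X with hxdef
  set n := m + 2 with hndef
  set a : K := x + 1 - ((m+2:ℕ):K) * x⁻¹ with hadef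
  set b : K := x + 1 with hbdef
  set A₁ : Matrix (Fin n) (Fin n) K :=
    Matrix.diagonal (fun _ => b) - Matrix.of (fun _ _ => (1:K)) with hA₁
  set B₁ : Matrix (Fin n) (Fin n) K :=
    Matrix.of (fun i _ => if i = (0 : Fin n) then (-1:K) else 0) with hB₁
  set C₁ : Matrix (Fin n) (Fin n) K :=
    Matrix.of (fun _ j => if j = (0 : Fin n) then (-1:K) else 0) with hC₁
  set D₁ : Matrix (Fin n) (Fin n) K := Matrix.diagonal (fun _ => x) with hD₁
  rw [Matrix.charpoly, RingHom.map_det, RingHom.mapMatrix_apply]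
  rw [← Matrix.det_submatrix_equiv_self (finSumFinEquiv : Fin n ⊕ Fin n ≃ Fin (n + n))]
  have hblock : ((charmatrix (Ank n n)).map φ).submatrix finSumFinEquiv finSumFinEquiv
      = Matrix.fromBlocks A₁ B₁ C₁ D₁ := by
    ext i j
    rcases i with i | i <;> rcases j with j | j
    · by_cases h : i = j
      · subst h
        simp [charmatrix_apply_eq, Ank, Matrix.map_apply, hA₁]
        ring
      · have h2 : (Fin.castAdd n i) ≠ (Fin.castAdd n j) := by
          simpa [Fin.ext_iff] using fun hh => h (Fin.ext hh)
        simp [Matrix.map_apply, charmatrix_apply_ne _ _ _ h2, Ank, h2, hA₁,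
          Matrix.diagonal_apply_ne _ h, Fin.ext_iff, h, i.isLt, j.isLt, -Fin.val_eq_zero_iff]
        exact fun hh => h (Fin.ext hh)
    · have h2 : (Fin.castAdd n i) ≠ (Fin.natAdd n j) := by
        simp [Fin.ext_iff]; omega
      simp [Matrix.map_apply, charmatrix_apply_ne _ _ _ h2, Ank, h2, hB₁, Fin.ext_iff,
        Fin.coe_castAdd, Fin.coe_natAdd, -Fin.val_eq_zero_iff]
      split_ifs with h3 h4 h5 <;> simp_all [Fin.coe_castAdd, Fin.coe_natAdd, Fin.val_zero, Fin.ext_iff, Fin.val_addNat, -Fin.val_eq_zero_iff] <;> omega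
    · have h2 : (Fin.natAdd n i) ≠ (Fin.castAdd n j) := by
        simp [Fin.ext_iff]; omega
      simp [Matrix.map_apply, charmatrix_apply_ne _ _ _ h2, Ank, h2, hC₁, Fin.ext_iff,
        Fin.coe_castAdd, Fin.coe_natAdd, -Fin.val_eq_zero_iff]
      split_ifs with h3 h4 h5 <;> simp_all [Fin.coe_castAdd, Fin.coe_natAdd, Fin.val_zero, Fin.ext_iff, Fin.val_addNat, -Fin.val_eq_zero_iff] <;> omega
    · by_cases h : i = j
      · subst h
        simp [charmatrix_apply_eq, Ank, Matrix.map_apply, hD₁, hxdef]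
      · have h2 : (i.addNat n) ≠ (j.addNat n) := by
          simpa [Fin.ext_iff] using fun hh => h (Fin.ext hh)
        have h3 : ¬((i.addNat n ≠ j.addNat n) ∧ ((i.addNat n).val = 0 ∨
            (j.addNat n).val = 0 ∨
            ((i.addNat n).val < n ∧ (j.addNat n).val < n))) := by
          rintro ⟨-, h4 | h4 | ⟨h4, -⟩⟩ <;> rw [Fin.coe_addNat] at h4 <;> omega
        simp [Matrix.map_apply, charmatrix_apply_ne _ _ _ h2, Ank, h3, hD₁,
          Matrix.diagonal_apply_ne _ h]
        intro _; constructor <;> intro h5 <;> simp [Fin.ext_iff, -Fin.val_eq_zero_iff] at h5 <;> omega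
  rw [hblock]
  haveI : Invertible D₁ := Matrix.invertibleOfIsUnitDet _ (by
    rw [hD₁, det_diagonal, Finset.prod_const]
    exact (pow_ne_zero _ hx).isUnit)
  rw [Matrix.det_fromBlocks₂₂, invOf_eq_nonsing_inv]
  have hDinv : D₁⁻¹ = Matrix.diagonal (fun _ : Fin n => x⁻¹) := by
    apply Matrix.inv_eq_right_inv
    rw [hD₁, diagonal_mul_diagonal]
    convert Matrix.diagonal_one with i
    exact mul_inv_cancel₀ hx
  have hdet₁ : D₁.det = x ^ n := by rw [hD₁, det_diagonal, Finset.prod_const, Finset.card_univ, Fintype.card_fin]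
  set d : Fin n → K := fun i => if i = 0 then a else b with hd
  have hschur : A₁ - B₁ * D₁⁻¹ * C₁ = Matrix.diagonal d - Matrix.of (fun _ _ => (1:K)) := by
    rw [hDinv]
    ext i j
    have hmul : (B₁ * Matrix.diagonal (fun _ : Fin n => x⁻¹) * C₁) i j
        = (if i = 0 then (-1:K) else 0) * x⁻¹ * (if j = 0 then (-1:K) else 0) * n := by
      rw [Matrix.mul_apply]
      simp only [Matrix.mul_diagonal, hB₁, hC₁, Matrix.of_apply]
      rw [Finset.sum_const, Finset.card_univ, Fintype.card_fin]
      push_cast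
      ring
    simp only [Matrix.sub_apply, hmul]
    by_cases h : i = j
    · subst h
      by_cases h0 : i = 0 <;>
        simp [h0, hd, hA₁, hadef, hbdef, Matrix.diagonal_apply_eq] <;> push_cast [hndef] <;> ring
    · have e1 : Matrix.diagonal d i j = 0 := Matrix.diagonal_apply_ne _ h
      have e2 : Matrix.diagonal (fun _ : Fin n => b) i j = 0 := Matrix.diagonal_apply_ne _ h
      simp only [hA₁, Matrix.sub_apply, Matrix.of_apply, e1, e2]
      by_cases hi : i = 0
      · by_cases hj : j = 0
        · exact absurd (hi.trans hj.symm) h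
        · simp [hi, hj]
      · simp [hi]
  rw [hschur, det_diagonal_sub_one d (by
    intro i
    by_cases h0 : i = 0 <;> simp [hd, h0, ha, hx1])]
  have hprod : (∏ i, d i) = a * b ^ (m+1) := by
    rw [Fin.prod_univ_succ]
    simp [hd, Fin.succ_ne_zero]
  have hsum : (∑ i, (d i)⁻¹) = a⁻¹ + ((m+1:ℕ):K) * b⁻¹ := by
    rw [Fin.sum_univ_succ]
    simp [hd, Fin.succ_ne_zero, Finset.sum_const, Finset.card_univ, nsmul_eq_mul]
  rw [hdet₁, hprod, hsum]


/-- The recurrence for characteristic polynomials: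
`P_{A_{n*n}}(λ) = λⁿ P_{A_{n*0}}(λ) - n λ^(n-1) P_{A_{(n-1)*0}}(λ)`,
where `P_M(λ) = det(λI - M)` is the characteristic polynomial. -/
theorem charpoly_Ank_recurrence (n : ℕ) (hn : 2 ≤ n) :
    (Ank n n).charpoly =
      X ^ n * (Ank n 0).charpoly - C (n : ℝ) * X ^ (n - 1) * (Ank (n - 1) 0).charpoly := by
  obtain ⟨m, rfl⟩ : ∃ m, n = m + 2 := ⟨n - 2, by omega⟩
  set K := FractionRing (Polynomial ℝ)
  set φ : Polynomial ℝ →+* K := algebraMap (Polynomial ℝ) K with hφ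
  have hinj : Function.Injective φ := IsFractionRing.injective (Polynomial ℝ) K
  apply hinj
  have hx : φ X ≠ 0 := by
    rw [map_ne_zero_iff φ hinj]
    exact Polynomial.X_ne_zero
  have hx1 : φ X + 1 ≠ 0 := by
    rw [show (1 : K) = φ 1 from (_root_.map_one φ).symm, ← map_add,
      map_ne_zero_iff φ hinj]
    intro hcon
    have h0 := congrArg (fun p => Polynomial.coeff p 1) hcon
    simp [Polynomial.coeff_one] at h0
  have hq : φ X * (φ X + 1) - ((m+2 : ℕ) : K) ≠ 0 := by
    have hp : (X * (X + 1) - ((m+2 : ℕ) : Polynomial ℝ)) ≠ 0 := by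
      intro hzero
      have h0 := congrArg (fun p => Polynomial.coeff p 0) hzero
      simp [Polynomial.coeff_natCast_ite, Polynomial.coeff_one] at h0
      have hm : (0:ℝ) ≤ (m:ℝ) := Nat.cast_nonneg m
      norm_num at h0
      linarith
    rw [← map_ne_zero_iff φ hinj] at hp
    intro hcon
    apply hp
    rw [map_sub, _root_.map_mul, map_add, _root_.map_one, map_natCast]
    exact hcon
  have ha : φ X + 1 - ((m+2 : ℕ) : K) * (φ X)⁻¹ ≠ 0 := by
    intro hcon
    apply hq
    have h2 : (φ X + 1 - ((m+2 : ℕ) : K) * (φ X)⁻¹) * φ X = 0 := by rw [hcon]; ring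
    calc φ X * (φ X + 1) - ((m+2:ℕ):K)
        = (φ X + 1 - ((m+2:ℕ):K) * (φ X)⁻¹) * φ X
            + ((m+2:ℕ):K) * ((φ X)⁻¹ * φ X) - ((m+2:ℕ):K) := by ring
      _ = 0 := by rw [h2, inv_mul_cancel₀ hx]; ring
  have h10 : Ank (m + 2 - 1) 0 = Ank (m + 1) 0 := rfl
  have hC : (C (((m+2:ℕ)) : ℝ)) = ((m+2 : ℕ) : Polynomial ℝ) := Polynomial.C_eq_natCast _
  rw [h10, hC]
  simp only [map_sub, _root_.map_mul, map_pow, map_natCast]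
  rw [charpoly_Ankn_map φ m hx hx1 ha, charpoly_Ank0_map φ hx1 (m+2),
    charpoly_Ank0_map φ hx1 (m+1)]
  have hexp : m + 2 - 1 = m + 1 := rfl
  rw [hexp]
  have hq2 : φ X ^ 2 + φ X - ((m:K) + 2) ≠ 0 := by
    intro hcon
    apply hq
    push_cast
    linear_combination hcon
  set x := φ X with hxd
  set a : K := x + 1 - ((m+2:ℕ):K) * x⁻¹ with had
  have key : ∀ t s : K, a * t * (1 - (a⁻¹ + s)) = a * t - t - a * t * s := by
    intro t s
    have : a * a⁻¹ = 1 := mul_inv_cancel₀ ha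
    linear_combination (-t) * this
  rw [key]
  rw [had]
  push_cast
  have hu : x * x⁻¹ = 1 := mul_inv_cancel₀ hx
  have hv : (x+1) * (x+1)⁻¹ = 1 := mul_inv_cancel₀ hx1
  linear_combination x^(m+1) * (x+1)^(m+1) * ((-((m:K)+2) + ((m:K)+2)*((m:K)+1)*(x+1)⁻¹) * hu + x * hv)
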